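/- Let y be a function of one complex variable valued in A⊗A satisfying y^{12}(−u′)·y^{13}(u+u′) − y^{23}(u+u′)·y^{12}(u) + y^{13}(u)·y^{23}(u′) = 0 for all u, u′ at which all terms are defined, together with y(−u) + y^{21}(u) = P. Then r(u,v) = y(u) + (e^v/(1−e^v))·P satisfies the AYBE and the unitarity condition r^{21}(−u,−v) = −r(u,v) (for all u,u′,v,v′ at which all terms are defined, with e^v ≠ 1, e^{v′} ≠ 1, e^{v+v′} ≠ 1). -/

import Mathlib

open Complex

/-- `Matₙ(ℂ)` -/
abbrev M1 (n : ℕ) := Matrix (Fin n) (Fin n) ℂ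
/-- `Matₙ ⊗ Matₙ`, realized as matrices indexed by pairs (Kronecker indexing). -/
abbrev M2 (n : ℕ) := Matrix (Fin n × Fin n) (Fin n × Fin n) ℂ
/-- `Matₙ ⊗ Matₙ ⊗ Matₙ`. -/
abbrev M3 (n : ℕ) := Matrix (Fin n × Fin n × Fin n) (Fin n × Fin n × Fin n) ℂ

/-- matrix unit `e_{ij}` (ℕ-indexed, zero if out of range) -/
def Eu (n : ℕ) (i j : ℕ) : M1 n := fun a b => if (a : ℕ) = i ∧ (b : ℕ) = j then 1 else 0

/-- Kronecker/tensor product of two matrices: `a ⊗ b`. -/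
def tens {n : ℕ} (a b : M1 n) : M2 n := fun p q => a p.1 q.1 * b p.2 q.2

/-- `x ↦ x^{12}` -/
def emb12 {n : ℕ} (x : M2 n) : M3 n :=
  fun p q => x (p.1, p.2.1) (q.1, q.2.1) * (if p.2.2 = q.2.2 then 1 else 0)
/-- `x ↦ x^{13}` -/
def emb13 {n : ℕ} (x : M2 n) : M3 n :=
  fun p q => x (p.1, p.2.2) (q.1, q.2.2) * (if p.2.1 = q.2.1 then 1 else 0)
/-- `x ↦ x^{23}` -/
def emb23 {n : ℕ} (x : M2 n) : M3 n :=
  fun p q => x (p.2.1, p.2.2) (q.2.1, q.2.2) * (if p.1 = q.1 then 1 else 0)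
/-- `x ↦ x^{21}` (flip of the two tensor factors) -/
def flipT {n : ℕ} (x : M2 n) : M2 n := fun p q => x (p.2, p.1) (q.2, q.1)

/-- The permutation matrix `P = Σ_{i,j} e_{ij} ⊗ e_{ji}`. -/
def Pmat (n : ℕ) : M2 n := fun p q => if p.1 = q.2 ∧ p.2 = q.1 then 1 else 0

/-- Left-hand side of the AYBE with two spectral parameters. -/
noncomputable def aybeLHS {n : ℕ} (r : ℂ → ℂ → M2 n) (u u' v v' : ℂ) : M3 n :=
  emb12 (r (-u') v) * emb13 (r (u + u') (v + v'))
    - emb23 (r (u + u') v') * emb12 (r u v)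
    + emb13 (r u (v + v')) * emb23 (r u' v')

/-- Left-hand side of the CYBE with spectral parameter. -/
noncomputable def cybeLHS {n : ℕ} (f : ℂ → M2 n) (v v' : ℂ) : M3 n :=
  (emb12 (f v) * emb13 (f (v + v')) - emb13 (f (v + v')) * emb12 (f v))
    + (emb12 (f v) * emb23 (f v') - emb23 (f v') * emb12 (f v))
    + (emb13 (f (v + v')) * emb23 (f v') - emb23 (f v') * emb13 (f (v + v')))


/-- Left-hand side of the spectral-parameter-free AYBE for a one-variable function. -/
noncomputable def aybe1LHS {n : ℕ} (y : ℂ → M2 n) (u u' : ℂ) : M3 n :=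
  emb12 (y (-u')) * emb13 (y (u + u'))
    - emb23 (y (u + u')) * emb12 (y u)
    + emb13 (y u) * emb23 (y u')


section Aux
variable {n : ℕ}

lemma L1 (x : M2 n) : emb12 (Pmat n) * emb13 x = emb23 x * emb12 (Pmat n) := by
  ext p q
  simp only [Matrix.mul_apply, emb12, emb13, emb23, Pmat, Fintype.sum_prod_type]
  simp [ite_and, Finset.sum_ite_eq, Finset.sum_ite_eq', mul_comm]

lemma L2 (x : M2 n) : emb13 x * emb23 (Pmat n) = emb23 (Pmat n) * emb12 x := by
  ext p q
  simp only [Matrix.mul_apply, emb12, emb13, emb23, Pmat, Fintype.sum_prod_type]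
  simp [ite_and, Finset.sum_ite_eq, Finset.sum_ite_eq', mul_comm]

lemma L3 (x : M2 n) : emb12 x * emb13 (Pmat n) = emb13 (Pmat n) * emb23 (flipT x) := by
  ext p q
  simp only [Matrix.mul_apply, emb12, emb13, emb23, Pmat, flipT, Fintype.sum_prod_type]
  simp [ite_and, Finset.sum_ite_eq, Finset.sum_ite_eq', mul_comm]

lemma flipP : flipT (Pmat n) = Pmat n := by
  ext p q; simp [flipT, Pmat, and_comm]

lemma emb12_add (x z : M2 n) : emb12 (x + z) = emb12 x + emb12 z := by
  ext p q; simp only [emb12, Matrix.add_apply]; ring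
lemma emb13_add (x z : M2 n) : emb13 (x + z) = emb13 x + emb13 z := by
  ext p q; simp only [emb13, Matrix.add_apply]; ring
lemma emb23_add (x z : M2 n) : emb23 (x + z) = emb23 x + emb23 z := by
  ext p q; simp only [emb23, Matrix.add_apply]; ring
lemma emb13_sub (x z : M2 n) : emb13 (x - z) = emb13 x - emb13 z := by
  ext p q; simp only [emb13, Matrix.sub_apply]; ring
lemma emb23_sub (x z : M2 n) : emb23 (x - z) = emb23 x - emb23 z := by
  ext p q; simp only [emb23, Matrix.sub_apply]; ring
lemma emb12_smul (c : ℂ) (x : M2 n) : emb12 (c • x) = c • emb12 x := by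
  ext p q; simp [emb12, mul_assoc]
lemma emb13_smul (c : ℂ) (x : M2 n) : emb13 (c • x) = c • emb13 x := by
  ext p q; simp [emb13, mul_assoc]
lemma emb23_smul (c : ℂ) (x : M2 n) : emb23 (c • x) = c • emb23 x := by
  ext p q; simp [emb23, mul_assoc]
lemma flipT_add (x z : M2 n) : flipT (x + z) = flipT x + flipT z := by
  ext p q; simp [flipT]
lemma flipT_smul (c : ℂ) (x : M2 n) : flipT (c • x) = c • flipT x := by
  ext p q; simp [flipT]

lemma L4 : emb12 (Pmat n) * emb13 (Pmat n) = emb23 (Pmat n) * emb12 (Pmat n) :=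
  L1 (Pmat n)
lemma L5 : emb13 (Pmat n) * emb23 (Pmat n) = emb23 (Pmat n) * emb12 (Pmat n) := by
  have h := L3 (Pmat n)
  rw [flipP] at h
  rw [← h, L4]

lemma scal (x z : ℂ) (hx : x ≠ 1) (hz : z ≠ 1) (hxz : x * z ≠ 1) :
    x / (1 - x) * (x * z / (1 - x * z)) + x * z / (1 - x * z)
      - x / (1 - x) * (z / (1 - z)) + x * z / (1 - x * z) * (z / (1 - z)) = 0 := by
  have h1 : (1 : ℂ) - x ≠ 0 := sub_ne_zero.mpr hx.symm
  have h2 : (1 : ℂ) - z ≠ 0 := sub_ne_zero.mpr hz.symm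
  have h3 : (1 : ℂ) - x * z ≠ 0 := sub_ne_zero.mpr hxz.symm
  field_simp
  ring

end Aux


/-- **Lemma `nypl`, Baxterization.** If `y` satisfies the
spectral-parameter-free AYBE and `y(-u) + y^{21}(u) = P`, then
`r(u,v) = y(u) + (e^v/(1-e^v)) P` satisfies the AYBE and the unitarity condition. -/
theorem baxterization (n : ℕ) (hn : 2 ≤ n) (y : ℂ → M2 n)
    (hy : ∀ u u' : ℂ, aybe1LHS y u u' = 0)
    (hyP : ∀ u : ℂ, y (-u) + flipT (y u) = Pmat n)
    (r : ℂ → ℂ → M2 n)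
    (hr : ∀ u v : ℂ, r u v = y u + (Complex.exp v / (1 - Complex.exp v)) • Pmat n) :
    (∀ u u' v v' : ℂ, Complex.exp v ≠ 1 → Complex.exp v' ≠ 1 →
        Complex.exp (v + v') ≠ 1 → aybeLHS r u u' v v' = 0) ∧
    (∀ u v : ℂ, Complex.exp v ≠ 1 → flipT (r (-u) (-v)) = - r u v) := by
  have hflip : ∀ u : ℂ, flipT (y (-u)) = Pmat n - y u := by
    intro u
    have h := hyP (-u)
    rw [neg_neg] at h
    rw [← h]; abel
  constructor
  · intro u u' v v' hv hv' hvv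
    set a := Complex.exp v / (1 - Complex.exp v) with ha
    set b := Complex.exp v' / (1 - Complex.exp v') with hb
    set c := Complex.exp (v + v') / (1 - Complex.exp (v + v')) with hc
    have h3 : emb12 (y (-u')) * emb13 (Pmat n)
        = emb13 (Pmat n) * emb23 (Pmat n) - emb13 (Pmat n) * emb23 (y u') := by
      rw [L3, hflip, emb23_sub, mul_sub]
    have main : aybeLHS r u u' v v'
        = aybe1LHS y u u'
          + (a * c + c - a * b + c * b)
              • (emb23 (Pmat n) * emb12 (Pmat n)) := by
      simp only [aybeLHS, aybe1LHS, hr]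
      rw [show Complex.exp (v + v') / (1 - Complex.exp (v + v')) = c from rfl]
      simp only [emb12_add, emb13_add, emb23_add, emb12_smul, emb13_smul, emb23_smul,
        mul_add, add_mul, smul_mul_assoc, mul_smul_comm, smul_smul,
        L1 (y (u + u')), L2 (y u), h3, L4, L5]
      module
    rw [main, hy]
    have hs : a * c + c - a * b + c * b = 0 := by
      rw [ha, hb, hc, Complex.exp_add]
      exact scal (Complex.exp v) (Complex.exp v') hv hv'
        (by rwa [← Complex.exp_add])
    rw [hs]
    simp
  · intro u v hv
    have hx0 := Complex.exp_ne_zero v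
    have h1 : (1 : ℂ) - Complex.exp v ≠ 0 := sub_ne_zero.mpr hv.symm
    have h2 : (1 : ℂ) - (Complex.exp v)⁻¹ ≠ 0 := by
      rw [sub_ne_zero]
      exact fun h => hv (inv_eq_one.mp h.symm)
    have hsc : Complex.exp (-v) / (1 - Complex.exp (-v))
        = -1 - Complex.exp v / (1 - Complex.exp v) := by
      have h4 : (-1 : ℂ) + Complex.exp v ≠ 0 := by
        intro h; apply hv; linear_combination h
      rw [Complex.exp_neg]
      field_simp
      ring
    rw [hr, hr, flipT_add, flipT_smul, flipP, hflip, hsc]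
    module
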